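/- arXiv:2105.13735 — 3 statements merged into one kernel-verified Lean document; each statement's English description precedes it below -/
import Mathlib

section
/- Let R be a commutative ring, M a finitely generated R-module, T an R-linear endomorphism of a complex C of R-modules, x ∈ R a non-zerodivisor on the terms of C. Suppose T(C) ⊆ xC and define T' := x^{-1}T. If X := {φ ∈ End_R(C) : ∃k, x^k φ ∈ T·R[T]} is a finitely generated R-module, then T lies in the radical of the ideal xT̃ where T̃ = R[T]; more precisely there exists N with T^{N+1} ∈ x·R[T]. -/
/-!
STATEMENT 6: Let `R` be a commutative Noetherian ring, `C` (a term of a complex) an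
`R`-module, `T` an `R`-linear endomorphism of `C`, and `x ∈ R` a non-zerodivisor on `C`
with `T(C) ⊆ xC`.  Let `T̃ = R[T]` be the commutative subalgebra of `End_R C` generated
by `T` and let `X = {φ ∈ End_R C : ∃ k, x^k φ ∈ R[T]}`.  If `X` is a finitely generated
`R`-module then there exists `N` with `T^{N+1} ∈ x·R[T]`; in particular `T` lies in the
radical of the ideal `x·T̃`.
-/

theorem stmt6 (R : Type) [CommRing R] [IsNoetherianRing R]
    (C : Type) [AddCommGroup C] [Module R C]
    (T : Module.End R C) (x : R)
    (hx : ∀ c : C, x • c = 0 → c = 0)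
    (hT : ∀ c : C, ∃ c' : C, T c = x • c')
    (hX : (Submodule.span R
        {φ : Module.End R C | ∃ k : ℕ,
          x ^ k • φ ∈ Algebra.adjoin R {T}}).FG) :
    ∃ (N : ℕ) (s : Module.End R C),
      s ∈ Algebra.adjoin R {T} ∧ T ^ (N + 1) = x • s := by
  -- injectivity of multiplication by x
  have hinj : ∀ a b : C, x • a = x • b → a = b := by
    intro a b h
    have : a - b = 0 := hx (a - b) (by rw [smul_sub, h, sub_self])
    exact sub_eq_zero.mp this
  -- construct T' = x⁻¹ T
  have hTx : ∀ c : C, T c = x • Classical.choose (hT c) :=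
    fun c => Classical.choose_spec (hT c)
  obtain ⟨T', hxT'⟩ : ∃ T' : Module.End R C, x • T' = T := by
    refine ⟨{ toFun := fun c => Classical.choose (hT c)
              map_add' := ?_, map_smul' := ?_ }, ?_⟩
    · intro a b
      apply hinj
      rw [smul_add, ← hTx, ← hTx, ← hTx, map_add]
    · intro r a
      apply hinj
      rw [RingHom.id_apply, smul_comm x r, ← hTx, ← hTx, map_smul]
    · ext c
      exact (hTx c).symm
  have hpow : ∀ k : ℕ, x ^ k • T' ^ k = T ^ k := by
    intro k
    induction k with
    | zero => simp
    | succ n ih =>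
        rw [pow_succ, pow_succ, pow_succ, ← ih, ← hxT', smul_mul_smul_comm]
  -- the submodule X
  set X : Submodule R (Module.End R C) := Submodule.span R
      {φ : Module.End R C | ∃ k : ℕ, x ^ k • φ ∈ Algebra.adjoin R {T}} with hXdef
  have hmem : ∀ k : ℕ, T' ^ k ∈ X := by
    intro k
    apply Submodule.subset_span
    have h1 : x ^ k • T' ^ k ∈ Algebra.adjoin R {T} := by
      rw [hpow k]
      exact Subalgebra.pow_mem _ (Algebra.self_mem_adjoin_singleton R T) k
    exact ⟨k, h1⟩
  haveI : IsNoetherian R X := isNoetherian_of_fg_of_noetherian X hX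
  let y : ℕ → X := fun n => ⟨T' ^ n, hmem n⟩
  -- the chain of spans stabilizes
  let f : ℕ →o Submodule R X :=
    ⟨fun n => Submodule.span R (Set.range fun i : Fin (n + 1) => y (i : ℕ)), by
      intro n m hnm
      apply Submodule.span_mono
      rintro _ ⟨i, rfl⟩
      exact ⟨Fin.castLE (by omega) i, rfl⟩⟩
  obtain ⟨N, hN⟩ := monotone_stabilizes_iff_noetherian.mpr inferInstance f
  have hy : y (N + 1) ∈ f N := by
    rw [hN (N + 1) (by omega)]
    exact Submodule.subset_span ⟨Fin.last (N + 1), rfl⟩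
  have hy' : T' ^ (N + 1) ∈
      Submodule.span R (Set.range fun i : Fin (N + 1) => T' ^ (i : ℕ)) := by
    have hy2 : y (N + 1) ∈ Submodule.span R (Set.range fun i : Fin (N + 1) => y (i : ℕ)) := hy
    have := Submodule.mem_map_of_mem (f := X.subtype) hy2
    rwa [Submodule.map_span, ← Set.range_comp] at this
  obtain ⟨a, ha⟩ := (Submodule.mem_span_range_iff_exists_fun R).mp hy'
  refine ⟨N, ∑ i : Fin (N + 1), (a i * x ^ (N - (i : ℕ))) • T ^ (i : ℕ), ?_, ?_⟩
  · exact Subalgebra.sum_mem _ fun i _ =>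
      Subalgebra.smul_mem _ (Subalgebra.pow_mem _ (Algebra.self_mem_adjoin_singleton R T) _) _
  · have key : T ^ (N + 1) = x ^ (N + 1) • T' ^ (N + 1) := (hpow (N + 1)).symm
    rw [key, ← ha, Finset.smul_sum, Finset.smul_sum]
    refine Finset.sum_congr rfl fun i _ => ?_
    have hi : (i : ℕ) ≤ N := Nat.lt_succ_iff.mp i.isLt
    rw [← hpow (i : ℕ), smul_smul, smul_smul, smul_smul]
    congr 1
    have h1 : x ^ (N + 1) = x * x ^ (N - (i : ℕ)) * x ^ (i : ℕ) := by
      rw [mul_assoc, ← pow_add, Nat.sub_add_cancel hi, ← pow_succ']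
    rw [h1]; ring
end

section
/- With notation as above, if V_O^min ⊆ V_O are two admissible lattices in V_λ, then there exists r₀ such that for all r ≥ r₀, τ^{-r} * V_O ⊆ V_O^min. Consequently the ordinary parts (intersections ∩_n T^n C for the operator induced by τ^{-1}*) of complexes with coefficients in V_O^min and V_O agree. -/
open Pointwise

/-!
STATEMENT 16: With notation as in Statement 15 (admissible lattice `V` with weight-space
decomposition `M i`, highest weight `i₀`, renormalised operator `t = τ⁻¹ *`), let
`V_O^min ⊆ V_O` be a second admissible lattice (`Vmin`): an open `t`-stable `O`-submodule
containing the highest weight line with the same `O`-span on it.  Then there exists `r₀`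
such that for all `r ≥ r₀`, `τ^{-r} * V_O ⊆ V_O^min`; consequently the ordinary parts
`⋂_n t^n(·)` of the two lattices agree.
-/

theorem stmt16 (p : ℕ) (hp : p.Prime) (O : Type) [CommRing O]
    (V : Type) [AddCommGroup V] [Module O V]
    (ι : Type) [Fintype ι] (M : ι → Submodule O V) (i₀ : ι)
    (hsup : iSup M = ⊤)
    (hindep : iSupIndep M)
    (h : ι → ℕ) (hh : ∀ i, i ≠ i₀ → h i < h i₀)
    (u : V ≃ₗ[O] V)
    (hu : ∀ i, Submodule.map (u : V →ₗ[O] V) (M i) = M i)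
    (hu0 : ∀ v ∈ M i₀, u v = v)
    (t : V →ₗ[O] V)
    (ht : ∀ i, ∀ v ∈ M i, t v = (p : O) ^ (h i₀ - h i) • u v)
    (Vmin : Submodule O V)
    (hopen : ∃ k : ℕ, ((p : O) ^ k • (⊤ : Submodule O V)) ≤ Vmin)
    (hmin : M i₀ ≤ Vmin)
    (htmin : ∀ v ∈ Vmin, t v ∈ Vmin) :
    (∃ r₀ : ℕ, ∀ r ≥ r₀,
        Submodule.map ((t ^ r : Module.End O V) : V →ₗ[O] V) ⊤ ≤ Vmin) ∧
      (⨅ n : ℕ, Submodule.map ((t ^ n : Module.End O V) : V →ₗ[O] V) Vmin) =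
        (⨅ n : ℕ, Submodule.map ((t ^ n : Module.End O V) : V →ₗ[O] V) ⊤) := by
  obtain ⟨k, hk⟩ := hopen
  have key : ∀ (i : ι) (r : ℕ), ∀ v ∈ M i,
      ∃ w ∈ M i, ((t ^ r : Module.End O V) : V →ₗ[O] V) v
        = (p : O) ^ (r * (h i₀ - h i)) • w := by
    intro i r
    induction r with
    | zero => intro v hv; exact ⟨v, hv, by simp⟩
    | succ r ih =>
      intro v hv
      obtain ⟨w, hw, hweq⟩ := ih v hv
      refine ⟨u w, ?_, ?_⟩
      · rw [← hu i]; exact ⟨w, hw, rfl⟩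
      · have hsucc : ((t ^ (r + 1) : Module.End O V) : V →ₗ[O] V) v
            = t (((t ^ r : Module.End O V) : V →ₗ[O] V) v) := by
          rw [pow_succ']; rfl
        rw [hsucc, hweq, map_smul, ht i w hw, smul_smul, ← pow_add,
          Nat.succ_mul, Nat.add_comm (r * (h i₀ - h i))]
  have main : ∀ r ≥ k, Submodule.map ((t ^ r : Module.End O V) : V →ₗ[O] V) ⊤ ≤ Vmin := by
    intro r hr
    rw [← hsup, Submodule.map_iSup]
    apply iSup_le
    intro i
    rintro x ⟨v, hv, rfl⟩
    obtain ⟨w, hw, hweq⟩ := key i r v hv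
    by_cases hi : i = i₀
    · subst hi
      rw [hweq]
      simp only [Nat.sub_self, Nat.mul_zero, pow_zero, one_smul]
      exact hmin hw
    · have hre : k ≤ r * (h i₀ - h i) := by
        calc k ≤ r := hr
        _ = r * 1 := (Nat.mul_one r).symm
        _ ≤ r * (h i₀ - h i) :=
          Nat.mul_le_mul_left r (Nat.sub_pos_of_lt (hh i hi))
      apply hk
      rw [hweq]
      obtain ⟨m, hm⟩ := Nat.exists_eq_add_of_le hre
      rw [hm, pow_add, mul_smul]
      exact Submodule.smul_mem_pointwise_smul _ _ _ trivial
  refine ⟨⟨k, main⟩, le_antisymm (iInf_mono fun n => Submodule.map_mono le_top) ?_⟩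
  apply le_iInf
  intro m
  refine le_trans (iInf_le _ (m + k)) ?_
  have hpow : (t ^ (m + k) : Module.End O V) = (t ^ m) * (t ^ k) := pow_add t m k
  rw [hpow]
  have hcomp : ((t ^ m * t ^ k : Module.End O V) : V →ₗ[O] V)
      = ((t ^ m : Module.End O V) : V →ₗ[O] V).comp ((t ^ k : Module.End O V) : V →ₗ[O] V) := rfl
  rw [hcomp, Submodule.map_comp]
  exact Submodule.map_mono (main k le_rfl)
end

section
/- Let M• be a bounded complex of free modules over a regular local ring Λ with residue field k, concentrated in degrees [0, ν], such that H^j(M• ⊗^L_Λ k) = 0 for all j ≠ d (where 0 ≤ d ≤ ν). Then H^j(M•) = 0 for j ≠ d, H^d(M•) is a finite free Λ-module, and for every ideal I generated by a regular sequence, H^d(M• ⊗^L_Λ Λ/I) = H^d(M•) ⊗_Λ Λ/I with all other cohomology of M• ⊗^L_Λ Λ/I vanishing. -/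
/-!
Call a linear map `f` split if `f ∘ g ∘ f = f` for some `g`, i.e. if `ker f` and `range f` are
direct summands. Over a local ring, exactness of the fibre `M ⊗ k` at `Mʲ` lets splitness pass
between the two differentials at `Mʲ`. From `dʲ` to `dʲ⁻¹`: the cycles `Zʲ` are then a direct
summand of `Mʲ`, hence projective, and `Mʲ⁻¹ → Zʲ` is surjective modulo `𝔪`, so surjective by
Nakayama, so split. From `dʲ⁻¹` to `dʲ`: a complement of the boundaries `Bʲ` in `Mʲ` maps to the
free module `Mʲ⁺¹` injectively modulo `𝔪`, hence split injectively. Starting from the zero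
differentials at both ends of `M` and moving towards degree `d`, every differential of `M` is split.

The homology of a complex with split differentials is a direct summand of its terms (the fixed
points of an explicit idempotent) and commutes with every base change `- ⊗ N`. Hence each `Hʲ(M)` is
finite projective, so free, and for `j ≠ d`, `Hʲ(M) ⊗ k = Hʲ(M ⊗ k) = 0` forces `Hʲ(M) = 0`.
-/

open CategoryTheory MonoidalCategory TensorProduct

namespace LinearMap

section Split

variable {R : Type*} [CommRing R] {M N : Type*} [AddCommGroup M] [AddCommGroup N] [Module R M]
  [Module R N]

def IsSplit (f : M →ₗ[R] N) : Prop := ∃ g : N →ₗ[R] M, f ∘ₗ g ∘ₗ f = f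

lemma isSplit_zero : (0 : M →ₗ[R] N).IsSplit := ⟨0, rfl⟩

lemma isSplit_of_subsingleton [Subsingleton N] (f : M →ₗ[R] N) : f.IsSplit :=
  ⟨0, Subsingleton.elim _ _⟩

variable (f : M →ₗ[R] N) (g : N →ₗ[R] M) (hfg : f ∘ₗ g ∘ₗ f = f)
include hfg

def kerRetraction : M →ₗ[R] ker f :=
  (id - g ∘ₗ f).codRestrict _ fun x ↦ by
    simpa [sub_eq_zero] using congr($hfg x).symm

@[simp]
lemma coe_kerRetraction_apply (x : M) : (f.kerRetraction g hfg x : M) = x - g (f x) := rfl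

lemma kerRetraction_comp_subtype : f.kerRetraction g hfg ∘ₗ (ker f).subtype = id := by
  ext ⟨x, hx⟩
  simp [mem_ker.1 hx]

lemma kerRetraction_surjective : Function.Surjective (f.kerRetraction g hfg) :=
  Function.LeftInverse.surjective fun x ↦ congr($(f.kerRetraction_comp_subtype g hfg) x)

lemma projective_ker [Module.Projective R M] : Module.Projective R (ker f) :=
  .of_split _ _ (f.kerRetraction_comp_subtype g hfg)

lemma finite_ker [Module.Finite R M] : Module.Finite R (ker f) :=
  .of_surjective _ (f.kerRetraction_surjective g hfg)

noncomputable def kerRTensorEquiv (Q : Type*) [AddCommGroup Q] [Module R Q] :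
    ker (f.rTensor Q) ≃ₗ[R] ker f ⊗[R] Q :=
  have hinj : Function.Injective ((ker f).subtype.rTensor Q) :=
    Function.LeftInverse.injective (g := (f.kerRetraction g hfg).rTensor Q) fun x ↦ by
      rw [← rTensor_comp_apply, kerRetraction_comp_subtype, rTensor_id, id_apply]
  have hrange : range ((ker f).subtype.rTensor Q) = ker (f.rTensor Q) := by
    refine le_antisymm ?_ fun x hx ↦ ⟨(f.kerRetraction g hfg).rTensor Q x, ?_⟩
    · rw [range_le_ker_iff, ← rTensor_comp, comp_ker_subtype, rTensor_zero]
    · have hx : f.rTensor Q x = 0 := hx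
      rw [← rTensor_comp_apply,
        show (ker f).subtype ∘ₗ f.kerRetraction g hfg = id - g ∘ₗ f from rfl, rTensor_sub,
        rTensor_id, rTensor_comp, sub_apply, comp_apply, hx, map_zero, sub_zero, id_apply]
  (LinearEquiv.ofEq _ _ hrange.symm).trans (LinearEquiv.ofInjective _ hinj).symm

end Split

section Homology

variable {R : Type*} [CommRing R] {A B C : Type*} [AddCommGroup A] [AddCommGroup B]
  [AddCommGroup C] [Module R A] [Module R B] [Module R C]

abbrev homology (a : A →ₗ[R] B) (b : B →ₗ[R] C) (hab : b ∘ₗ a = 0) : Type _ :=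
  ker b ⧸ range (a.codRestrict (ker b) fun y ↦ by simpa using congr($hab y))

/-- When `a ∘ t ∘ a = a`, `b ∘ h ∘ b = b` and `b ∘ a = 0`, this is an idempotent whose fixed
points form a complement of `range a` in `ker b`, hence a model of the homology at `B`. -/
def homologyProj (a : A →ₗ[R] B) (b : B →ₗ[R] C) (t : B →ₗ[R] A) (h : C →ₗ[R] B) :
    B →ₗ[R] B :=
  (id - a ∘ₗ t) ∘ₗ (id - h ∘ₗ b)

variable {a : A →ₗ[R] B} {b : B →ₗ[R] C} {t : B →ₗ[R] A} {h : C →ₗ[R] B}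

lemma homologyProj_rTensor (Q : Type*) [AddCommGroup Q] [Module R Q] :
    homologyProj (a.rTensor Q) (b.rTensor Q) (t.rTensor Q) (h.rTensor Q) =
      (homologyProj a b t h).rTensor Q := by
  simp [homologyProj, rTensor_comp, rTensor_sub, rTensor_id]

lemma homologyProj_apply_of_mem_ker {x : B} (hx : x ∈ ker b) :
    homologyProj a b t h x = x - a (t x) := by
  simp [homologyProj, mem_ker.1 hx]

variable (hab : b ∘ₗ a = 0) (hta : a ∘ₗ t ∘ₗ a = a) (hhb : b ∘ₗ h ∘ₗ b = b)
include hab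

include hta in
lemma homologyProj_eq_zero_of_mem_range {x : B} (hx : x ∈ range a) :
    homologyProj a b t h x = 0 := by
  obtain ⟨y, rfl⟩ := hx
  rw [homologyProj_apply_of_mem_ker (by simpa using congr($hab y)), sub_eq_zero]
  exact congr($hta y).symm

include hhb in
lemma homologyProj_mem_ker (x : B) : homologyProj a b t h x ∈ ker b := by
  have hab' (y : A) : b (a y) = 0 := by simpa using congr($hab y)
  simpa [homologyProj, hab', sub_eq_zero] using congr($hhb x).symm

include hta hhb in
lemma homologyProj_homologyProj (x : B) :
    homologyProj a b t h (homologyProj a b t h x) = homologyProj a b t h x := by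
  rw [homologyProj_apply_of_mem_ker (homologyProj_mem_ker hab hhb x), sub_eq_self]
  have hta' (z : B) : a (t (a (t z))) = a (t z) := congr($hta (t z))
  simp [homologyProj, hta']

include hta hhb in
lemma id_sub_homologyProj_comp_self :
    (id - homologyProj a b t h) ∘ₗ (id - homologyProj a b t h) = id - homologyProj a b t h := by
  ext x
  simp [homologyProj_homologyProj hab hta hhb]

noncomputable def homologyEquivKerIdSubHomologyProj :
    homology a b hab ≃ₗ[R] ker (id - homologyProj a b t h) :=
  let φ : ker b →ₗ[R] ker (id - homologyProj a b t h) :=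
    (homologyProj a b t h ∘ₗ (ker b).subtype).codRestrict _ fun z ↦ by
      simp [homologyProj_homologyProj hab hta hhb]
  have hφ : Function.Surjective φ := fun ⟨y, hy⟩ ↦ by
    have hwy : homologyProj a b t h y = y := (sub_eq_zero.1 hy).symm
    exact ⟨⟨y, hwy ▸ homologyProj_mem_ker hab hhb y⟩, Subtype.ext hwy⟩
  have hker : ker φ = range (a.codRestrict (ker b) fun y ↦ by simpa using congr($hab y)) := by
    ext ⟨z, hz⟩
    simp only [mem_ker, mem_range, Subtype.ext_iff]
    refine ⟨fun h0 ↦ ⟨t z, ?_⟩, ?_⟩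
    · change homologyProj a b t h z = 0 at h0
      rw [homologyProj_apply_of_mem_ker hz, sub_eq_zero] at h0
      exact h0.symm
    · rintro ⟨y, rfl⟩
      exact homologyProj_eq_zero_of_mem_range hab hta ⟨y, rfl⟩
  (Submodule.quotEquivOfEq _ _ hker.symm).trans (φ.quotKerEquivOfSurjective hφ)

variable (ha : a.IsSplit) (hb : b.IsSplit)
include ha hb

lemma projective_homology [Module.Projective R B] : Module.Projective R (homology a b hab) := by
  obtain ⟨t, hta⟩ := ha
  obtain ⟨h, hhb⟩ := hb
  have := projective_ker _ id (id_sub_homologyProj_comp_self hab hta hhb)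
  exact .of_equiv (homologyEquivKerIdSubHomologyProj hab hta hhb).symm

lemma finite_homology [Module.Finite R B] : Module.Finite R (homology a b hab) := by
  obtain ⟨t, hta⟩ := ha
  obtain ⟨h, hhb⟩ := hb
  have := finite_ker _ id (id_sub_homologyProj_comp_self hab hta hhb)
  exact .equiv (homologyEquivKerIdSubHomologyProj hab hta hhb).symm

noncomputable def homologyRTensorEquiv (Q : Type*) [AddCommGroup Q] [Module R Q] :
    homology (a.rTensor Q) (b.rTensor Q) (by rw [← rTensor_comp, hab, rTensor_zero]) ≃ₗ[R]
      homology a b hab ⊗[R] Q :=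
  have hta := ha.choose_spec
  have hhb := hb.choose_spec
  have hker : ker (id - homologyProj (a.rTensor Q) (b.rTensor Q) (ha.choose.rTensor Q)
      (hb.choose.rTensor Q)) = ker ((id - homologyProj a b ha.choose hb.choose).rTensor Q) := by
    rw [rTensor_sub, rTensor_id, homologyProj_rTensor]
  (homologyEquivKerIdSubHomologyProj (by rw [← rTensor_comp, hab, rTensor_zero])
      (by rw [← rTensor_comp, ← rTensor_comp, hta])
      (by rw [← rTensor_comp, ← rTensor_comp, hhb])).trans <|
    (LinearEquiv.ofEq _ _ hker).trans <|
      (kerRTensorEquiv _ id (id_sub_homologyProj_comp_self hab hta hhb) Q).trans <|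
        (homologyEquivKerIdSubHomologyProj hab hta hhb).symm.rTensor Q

end Homology

end LinearMap

section LocalRing

open LinearMap IsLocalRing

variable {R : Type*} [CommRing R] [IsLocalRing R] {M N : Type*} [AddCommGroup M]
  [AddCommGroup N] [Module R M] [Module R N]

lemma IsLocalRing.surjective_of_rTensor_surjective [Module.Finite R N] (f : M →ₗ[R] N)
    (hf : Function.Surjective (f.rTensor (R ⧸ maximalIdeal R))) : Function.Surjective f := by
  have hexact := rTensor_exact (R ⧸ maximalIdeal R) (exact_map_mkQ_range f)
    (Submodule.mkQ_surjective _)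
  have : Subsingleton ((N ⧸ range f) ⊗[R] ResidueField R) :=
    subsingleton_of_forall_eq 0 fun x ↦ by
      obtain ⟨y, rfl⟩ := rTensor_surjective _ (Submodule.mkQ_surjective _) x
      obtain ⟨z, rfl⟩ := hf y
      exact hexact.apply_apply_eq_zero z
  have : Subsingleton (N ⧸ range f) :=
    subsingleton_tensorProduct.1 (TensorProduct.comm R _ _).subsingleton
  rwa [← range_eq_top, ← Submodule.Quotient.subsingleton_iff]

lemma IsLocalRing.exists_leftInverse_of_rTensor_injective [Module.Finite R M] [Module.Finite R N]
    [Module.Free R N] (f : M →ₗ[R] N)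
    (hf : Function.Injective (f.rTensor (R ⧸ maximalIdeal R))) :
    ∃ g : N →ₗ[R] M, g ∘ₗ f = LinearMap.id :=
  (split_injective_iff_lTensor_residueField_injective f).2 ((lTensor_inj_iff_rTensor_inj _ f).2 hf)

namespace LinearMap.IsSplit

variable {A B C : Type*} [AddCommGroup A] [AddCommGroup B] [AddCommGroup C]
  [Module R A] [Module R B] [Module R C] {a : A →ₗ[R] B} {b : B →ₗ[R] C}

lemma left_of_exact_rTensor (hab : b ∘ₗ a = 0)
    (hexact : Function.Exact (a.rTensor (R ⧸ maximalIdeal R)) (b.rTensor (R ⧸ maximalIdeal R)))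
    [Module.Finite R B] [Module.Projective R B] (hb : b.IsSplit) : a.IsSplit := by
  obtain ⟨h, hhb⟩ := hb
  have := finite_ker b h hhb
  have := projective_ker b h hhb
  let a' := a.codRestrict (ker b) fun y ↦ by simpa using congr($hab y)
  have hPa : b.kerRetraction h hhb ∘ₗ a = a' := by
    ext y
    simp [a', show b (a y) = 0 by simpa using congr($hab y)]
  have ha' : Function.Surjective a' := by
    refine surjective_of_rTensor_surjective a' fun z ↦ ?_
    obtain ⟨y, hy⟩ := hexact ((ker b).subtype.rTensor _ z) |>.1 (by
      rw [← rTensor_comp_apply, comp_ker_subtype, rTensor_zero, zero_apply])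
    refine ⟨y, ?_⟩
    rw [← hPa, rTensor_comp_apply, hy, ← rTensor_comp_apply, kerRetraction_comp_subtype,
      rTensor_id, id_apply]
  obtain ⟨σ, hσ⟩ := Module.projective_lifting_property a' LinearMap.id ha'
  refine ⟨σ ∘ₗ b.kerRetraction h hhb, ?_⟩
  ext y
  change a (σ (b.kerRetraction h hhb (a y))) = a y
  rw [show b.kerRetraction h hhb (a y) = a' y from congr($hPa y)]
  exact congrArg Subtype.val congr($hσ (a' y))

lemma right_of_exact_rTensor (hab : b ∘ₗ a = 0)
    (hexact : Function.Exact (a.rTensor (R ⧸ maximalIdeal R)) (b.rTensor (R ⧸ maximalIdeal R)))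
    [Module.Finite R B] [Module.Finite R C] [Module.Free R C] (ha : a.IsSplit) : b.IsSplit := by
  obtain ⟨t, hta⟩ := ha
  have he : (a ∘ₗ t) ∘ₗ (a ∘ₗ t) = a ∘ₗ t := by
    ext x
    exact congr($hta (t x))
  have := finite_ker _ LinearMap.id he
  let P := (a ∘ₗ t).kerRetraction LinearMap.id he
  let φ := b ∘ₗ (ker (a ∘ₗ t)).subtype
  have hPa : P ∘ₗ a = 0 := by
    ext y
    simpa [P, sub_eq_zero] using congr($hta y).symm
  have hφP : φ ∘ₗ P = b := by
    ext x
    simpa [φ, P] using congr($hab (t x))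
  have hφ : Function.Injective (φ.rTensor (R ⧸ maximalIdeal R)) := by
    refine (injective_iff_map_eq_zero _).2 fun z hz ↦ ?_
    rw [rTensor_comp_apply] at hz
    obtain ⟨y, hy⟩ := (hexact _).1 hz
    rw [← id_apply (R := R) z, ← rTensor_id, ← kerRetraction_comp_subtype _ LinearMap.id he,
      rTensor_comp_apply, ← hy, ← rTensor_comp_apply, hPa, rTensor_zero, zero_apply]
  obtain ⟨ρ, hρ⟩ := exists_leftInverse_of_rTensor_injective φ hφ
  refine ⟨(ker (a ∘ₗ t)).subtype ∘ₗ ρ, ?_⟩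
  calc b ∘ₗ ((ker (a ∘ₗ t)).subtype ∘ₗ ρ) ∘ₗ b = φ ∘ₗ ρ ∘ₗ b := rfl
    _ = φ ∘ₗ (ρ ∘ₗ φ) ∘ₗ P := by rw [← hφP]; rfl
    _ = b := by rw [hρ, id_comp, hφP]

end LinearMap.IsSplit

end LocalRing

namespace CochainComplex

universe u

variable {R : Type u} [CommRing R]

lemma prev_nat (j : ℕ) : (ComplexShape.up ℕ).prev j = j - 1 := by
  cases j with
  | zero => exact prev_nat_zero
  | succ j => exact prev_nat_succ j

variable (K : CochainComplex (ModuleCat.{u} R) ℕ)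

lemma subsingleton_homology_iff_exact (j : ℕ) :
    Subsingleton (K.homology j) ↔ Function.Exact (K.d (j - 1) j) (K.d j (j + 1)) := by
  rw [← ModuleCat.isZero_iff_subsingleton, ← K.exactAt_iff_isZero_homology,
    K.exactAt_iff' (j - 1) j (j + 1) (prev_nat j) (next ℕ j),
    ShortComplex.ShortExact.moduleCat_exact_iff_function_exact]
  rfl

lemma d_comp_d_hom (i j k : ℕ) : (K.d j k).hom ∘ₗ (K.d i j).hom = 0 := by
  rw [← ModuleCat.hom_comp, K.d_comp_d, ModuleCat.hom_zero]

noncomputable def homologyLinearEquiv (j : ℕ) :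
    K.homology j ≃ₗ[R] LinearMap.homology (K.d (j - 1) j).hom (K.d j (j + 1)).hom
      (K.d_comp_d_hom _ _ _) :=
  (K.homologyIsoSc' (j - 1) j (j + 1) (prev_nat j) (next ℕ j) ≪≫
    (K.sc' _ _ _).moduleCatHomologyIso).toLinearEquiv

section Split

variable {K} {j : ℕ} (ha : (K.d (j - 1) j).hom.IsSplit) (hb : (K.d j (j + 1)).hom.IsSplit)
include ha hb

lemma projective_homology [Module.Projective R (K.X j)] : Module.Projective R (K.homology j) :=
  have := LinearMap.projective_homology (K.d_comp_d_hom _ _ _) ha hb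
  .of_equiv (K.homologyLinearEquiv j).symm

lemma finite_homology [Module.Finite R (K.X j)] : Module.Finite R (K.homology j) :=
  have := LinearMap.finite_homology (K.d_comp_d_hom _ _ _) ha hb
  .equiv (K.homologyLinearEquiv j).symm

noncomputable def homologyTensorRightEquiv (N : ModuleCat.{u} R) :
    (((tensorRight N).mapHomologicalComplex _).obj K).homology j ≃ₗ[R] K.homology j ⊗[R] N :=
  (homologyLinearEquiv _ j).trans <|
    (LinearMap.homologyRTensorEquiv (K.d_comp_d_hom _ _ _) ha hb N).trans <|
      (K.homologyLinearEquiv j).symm.rTensor N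

end Split

section LocalRing

open IsLocalRing

variable [IsLocalRing R] (M : CochainComplex (ModuleCat.{u} R) ℕ) [∀ i, Module.Free R (M.X i)]
  [∀ i, Module.Finite R (M.X i)] {n : ℕ}
  (hexact : ∀ j ≠ n, Function.Exact ((M.d (j - 1) j).hom.rTensor (R ⧸ maximalIdeal R))
    ((M.d j (j + 1)).hom.rTensor (R ⧸ maximalIdeal R)))
include hexact

lemma isSplit_d_of_le {j : ℕ} (hj : j ≤ n) : (M.d (j - 1) j).hom.IsSplit := by
  induction j with
  | zero =>
    rw [M.shape 0 0 (by simp), ModuleCat.hom_zero]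
    exact LinearMap.isSplit_zero
  | succ j ih =>
    exact (ih (by omega)).right_of_exact_rTensor (M.d_comp_d_hom _ _ _) (hexact j (by omega))

lemma isSplit_d_of_lt {ν : ℕ} (hν : ∀ i, ν < i → Subsingleton (M.X i)) {j : ℕ} (hj : n < j) :
    (M.d (j - 1) j).hom.IsSplit := by
  induction hk : ν + 1 - j generalizing j with
  | zero =>
    have := hν j (by omega)
    exact LinearMap.isSplit_of_subsingleton _
  | succ k ih =>
    exact (ih (j := j + 1) (by omega) (by omega)).left_of_exact_rTensor (M.d_comp_d_hom _ _ _)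
      (hexact j (by omega))

lemma isSplit_d {ν : ℕ} (hν : ∀ i, ν < i → Subsingleton (M.X i)) (j : ℕ) :
    (M.d (j - 1) j).hom.IsSplit :=
  (le_or_gt j n).elim (M.isSplit_d_of_le hexact) (M.isSplit_d_of_lt hexact hν)

end LocalRing

end CochainComplex

theorem stmt19_general (Λ : Type) [CommRing Λ] [IsLocalRing Λ]
    (ν d : ℕ)
    (M : CochainComplex (ModuleCat Λ) ℕ)
    (hfree : ∀ i, Module.Free Λ (M.X i))
    (hfin : ∀ i, Module.Finite Λ (M.X i))
    (hbound : ∀ i, ν < i → Subsingleton (M.X i))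
    (hconc : ∀ j, j ≠ d → Subsingleton
      ((((tensorRight (ModuleCat.of Λ (Λ ⧸ IsLocalRing.maximalIdeal Λ))).mapHomologicalComplex
          (ComplexShape.up ℕ)).obj M).homology j)) :
    (∀ j, j ≠ d → Subsingleton (M.homology j)) ∧
      Module.Free Λ (M.homology d) ∧ Module.Finite Λ (M.homology d) ∧
      ∀ I : Ideal Λ,
        (∃ rs : List Λ, RingTheory.Sequence.IsRegular Λ rs ∧
          Ideal.span {r | r ∈ rs} = I) →
        (∀ j, j ≠ d → Subsingleton
          ((((tensorRight (ModuleCat.of Λ (Λ ⧸ I))).mapHomologicalComplex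
              (ComplexShape.up ℕ)).obj M).homology j)) ∧
        Nonempty
          (((((tensorRight (ModuleCat.of Λ (Λ ⧸ I))).mapHomologicalComplex
              (ComplexShape.up ℕ)).obj M).homology d) ≃ₗ[Λ]
            ((M.homology d) ⊗[Λ] (Λ ⧸ I))) := by
  have := hfree
  have := hfin
  have hsplit (j : ℕ) : (M.d (j - 1) j).hom.IsSplit :=
    M.isSplit_d (fun j hj ↦ (CochainComplex.subsingleton_homology_iff_exact _ j).1 (hconc j hj)) hbound j
  have hfinite (j : ℕ) := CochainComplex.finite_homology (hsplit j) (hsplit (j + 1))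
  let e (N : ModuleCat Λ) (j : ℕ) :=
    CochainComplex.homologyTensorRightEquiv (hsplit j) (hsplit (j + 1)) N
  have hzero (j : ℕ) (hj : j ≠ d) : Subsingleton (M.homology j) :=
    have := hconc j hj
    IsLocalRing.subsingleton_tensorProduct.1
      ((TensorProduct.comm Λ (IsLocalRing.ResidueField Λ) (M.homology j)).trans
        (e (.of Λ (Λ ⧸ IsLocalRing.maximalIdeal Λ)) j).symm).subsingleton
  have := CochainComplex.projective_homology (hsplit d) (hsplit (d + 1))
  refine ⟨hzero, Module.free_of_flat_of_isLocalRing, hfinite d,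
    fun I _ ↦ ⟨fun j hj ↦ ?_, ⟨e _ d⟩⟩⟩
  have := hzero j hj
  exact (e _ j).subsingleton

theorem stmt19 (Λ : Type) [CommRing Λ] [IsNoetherianRing Λ] [IsLocalRing Λ]
    (hregloc : ∃ rs : List Λ, RingTheory.Sequence.IsRegular Λ rs ∧
      Ideal.span {r | r ∈ rs} = IsLocalRing.maximalIdeal Λ)
    (ν d : ℕ) (hd : d ≤ ν)
    (M : CochainComplex (ModuleCat Λ) ℕ)
    (hfree : ∀ i, Module.Free Λ (M.X i))
    (hfin : ∀ i, Module.Finite Λ (M.X i))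
    (hbound : ∀ i, ν < i → Subsingleton (M.X i))
    (hconc : ∀ j, j ≠ d → Subsingleton
      ((((tensorRight (ModuleCat.of Λ (Λ ⧸ IsLocalRing.maximalIdeal Λ))).mapHomologicalComplex
          (ComplexShape.up ℕ)).obj M).homology j)) :
    (∀ j, j ≠ d → Subsingleton (M.homology j)) ∧
      Module.Free Λ (M.homology d) ∧ Module.Finite Λ (M.homology d) ∧
      ∀ I : Ideal Λ,
        (∃ rs : List Λ, RingTheory.Sequence.IsRegular Λ rs ∧
          Ideal.span {r | r ∈ rs} = I) →
        (∀ j, j ≠ d → Subsingleton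
          ((((tensorRight (ModuleCat.of Λ (Λ ⧸ I))).mapHomologicalComplex
              (ComplexShape.up ℕ)).obj M).homology j)) ∧
        Nonempty
          (((((tensorRight (ModuleCat.of Λ (Λ ⧸ I))).mapHomologicalComplex
              (ComplexShape.up ℕ)).obj M).homology d) ≃ₗ[Λ]
            ((M.homology d) ⊗[Λ] (Λ ⧸ I))) :=
  stmt19_general Λ ν d M hfree hfin hbound hconc
end
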